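/- arXiv:1911.08918 — 2 statements merged into one kernel-verified Lean document; each statement's English description precedes it below -/
import Mathlib

section
/- Let R be a Noetherian ring containing an infinite field k as a subring, and let M be a finitely generated R-module generated by x_1, ..., x_n. For a prime ideal p of R write M(p) = M_p/pM_p, R(p) = R_p/pR_p, and for x in M let x(p) denote the image of x in M(p). Let P be a subset of Supp_R M, let x, y be elements of M, and set P' = { p in P : x(p) and y(p) are linearly dependent over R(p) }. If P' is finite and, for every p in P', either x(p) ≠ 0 or y(p) ≠ 0, then there exists an element a in k such that (x + a y)(p) is nonzero for all p in P. -/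
open TensorProduct

variable {R : Type*} [CommRing R]

/-- The residue field `R(p) = R_p / p R_p` of a prime `p`. -/
noncomputable abbrev resField (p : PrimeSpectrum R) : Type _ :=
  IsLocalRing.ResidueField (Localization.AtPrime p.asIdeal)

/-- The fiber `M(p) = M_p / p M_p` of a module `M` at a prime `p`,
realized as `R(p) ⊗[R] M`. -/
noncomputable def fiber (p : PrimeSpectrum R) (M : Type*) [AddCommGroup M] [Module R M] :
    Type _ :=
  resField p ⊗[R] M

noncomputable instance (p : PrimeSpectrum R) (M : Type*) [AddCommGroup M] [Module R M] :
    AddCommGroup (fiber p M) := inferInstanceAs (AddCommGroup (resField p ⊗[R] M))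

noncomputable instance (p : PrimeSpectrum R) (M : Type*) [AddCommGroup M] [Module R M] :
    Module (resField p) (fiber p M) := inferInstanceAs (Module (resField p) (resField p ⊗[R] M))

/-- The canonical image `x(p)` of `x ∈ M` in the fiber `M(p)`. -/
noncomputable def fiberImg (p : PrimeSpectrum R) {M : Type*} [AddCommGroup M] [Module R M]
    (x : M) : fiber p M :=
  (1 : resField p) ⊗ₜ[R] x

/-!
For `p ∈ P'` the vectors `x(p)`, `y(p)` are not both zero, so at most one `a ∈ k` kills
`x(p) + a y(p)`; for `p ∈ P \ P'` they are independent, so no `a` does. The finitely many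
bad values cannot exhaust the infinite field `k`.
-/

lemma fiberImg_add_smul (p : PrimeSpectrum R) {M : Type*} [AddCommGroup M] [Module R M]
    (x y : M) (c : R) :
    fiberImg p (x + c • y) = fiberImg p x + algebraMap R (resField p) c • fiberImg p y := by
  show (1 : resField p) ⊗ₜ[R] (x + c • y) = (1 : resField p) ⊗ₜ[R] x + _
  rw [tmul_add, tmul_smul, ← algebraMap_smul (resField p)]
  rfl

lemma Set.subsingleton_setOf_add_smul_eq_zero {K V : Type*} [DivisionRing K] [AddCommGroup V]
    [Module K V] {u v : V} (h : u ≠ 0 ∨ v ≠ 0) : {c : K | u + c • v = 0}.Subsingleton := by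
  intro a ha b hb
  have hv : v ≠ 0 := by
    rintro rfl
    simp_all
  have hab : (a - b) • v = 0 := by
    rw [sub_smul, ← add_sub_add_left_eq_sub _ _ u, ha, hb, sub_self]
  exact sub_eq_zero.mp ((smul_eq_zero.mp hab).resolve_right hv)

lemma LinearIndependent.add_smul_ne_zero {K V : Type*} [Ring K] [Nontrivial K] [AddCommGroup V]
    [Module K V] {u v : V} (h : LinearIndependent K ![u, v]) (c : K) : u + c • v ≠ 0 := fun h0 =>
  one_ne_zero (LinearIndependent.pair_iff.mp h 1 c (by rwa [one_smul])).1

theorem stmt0_general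
    (k : Type*) [Field k] [Infinite k] [Algebra k R]
    (M : Type*) [AddCommGroup M] [Module R M]
    (P : Set (PrimeSpectrum R))
    (x y : M)
    (P' : Set (PrimeSpectrum R))
    (hP' : P' = {p ∈ P | ¬ LinearIndependent (resField p) ![fiberImg p x, fiberImg p y]})
    (hfin : P'.Finite)
    (hnz : ∀ p ∈ P', fiberImg p x ≠ 0 ∨ fiberImg p y ≠ 0) :
    ∃ a : k, ∀ p ∈ P, fiberImg p (x + algebraMap k R a • y) ≠ 0 := by
  set bad : PrimeSpectrum R → Set k := fun p => {a | fiberImg p (x + algebraMap k R a • y) = 0}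
  have hbad : ∀ p ∈ P', (bad p).Subsingleton := fun p hp => by
    simp only [bad, fiberImg_add_smul]
    exact (Set.subsingleton_setOf_add_smul_eq_zero (hnz p hp)).preimage
      ((algebraMap R (resField p)).comp (algebraMap k R)).injective
  obtain ⟨a, ha⟩ := (hfin.biUnion fun p hp => (hbad p hp).finite).infinite_compl.nonempty
  refine ⟨a, fun p hp hzero => ?_⟩
  by_cases hp' : p ∈ P'
  · exact ha (Set.mem_biUnion hp' hzero)
  · have hli : LinearIndependent (resField p) ![fiberImg p x, fiberImg p y] := by
      simpa [hP', hp] using hp'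
    rw [fiberImg_add_smul] at hzero
    exact hli.add_smul_ne_zero _ hzero

/-- **Lemma 2.1(1).** Let `R` be a Noetherian ring containing an infinite field `k` as a
subring and `M` a finitely generated `R`-module generated by `x₁, …, xₙ`.  Let `P` be a
subset of `Supp_R M`, let `x, y ∈ M` and let
`P' = {p ∈ P | x(p), y(p) are linearly dependent over R(p)}`.  If `P'` is finite and for
every `p ∈ P'` either `x(p) ≠ 0` or `y(p) ≠ 0`, then there is `a ∈ k` with
`(x + a y)(p) ≠ 0` for all `p ∈ P`. -/
theorem stmt0 [IsNoetherianRing R] [Nontrivial R]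
    (k : Type*) [Field k] [Infinite k] [Algebra k R]
    (M : Type*) [AddCommGroup M] [Module R M] [Module.Finite R M]
    {n : ℕ} (xs : Fin n → M) (hgen : Submodule.span R (Set.range xs) = ⊤)
    (P : Set (PrimeSpectrum R)) (hP : P ⊆ Module.support R M)
    (x y : M)
    (P' : Set (PrimeSpectrum R))
    (hP' : P' = {p ∈ P | ¬ LinearIndependent (resField p) ![fiberImg p x, fiberImg p y]})
    (hfin : P'.Finite)
    (hnz : ∀ p ∈ P', fiberImg p x ≠ 0 ∨ fiberImg p y ≠ 0) :
    ∃ a : k, ∀ p ∈ P, fiberImg p (x + algebraMap k R a • y) ≠ 0 :=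
  stmt0_general k M P x y P' hP' hfin hnz
end

section
/- Let R be a Noetherian ring containing an infinite field k as a subring, and let M be a finitely generated R-module generated by x_1, ..., x_n. If P is a finite subset of Supp_R M, then there exists an element y in the k-linear span of x_1, ..., x_n (i.e. y ∈ Σ_{i=1}^n k x_i) such that y(p) is nonzero for all p in P. -/
/-!
For `p ∈ Supp M` the fiber `M(p)` is nonzero by Nakayama, so some generator `xᵢ` has
`xᵢ(p) ≠ 0`. Hence the coefficient vectors `c ∈ kⁿ` with `(Σ cᵢ xᵢ)(p) = 0` form a proper
`k`-subspace of `kⁿ`, and a vector space over an infinite field is not a finite union of proper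
subspaces.
-/

open TensorProduct

variable {R : Type*} [CommRing R]

theorem exists_sum_algebraMap_smul_notMem {k R M ι σ : Type*} [Field k] [Infinite k]
    [Semiring R] [Algebra k R] [AddCommMonoid M] [Module R M] [Finite ι] [Fintype σ]
    (N : ι → Submodule R M) (xs : σ → M) (h : ∀ i, ∃ j, xs j ∉ N i) :
    ∃ c : σ → k, ∀ i, ∑ j, algebraMap k R (c j) • xs j ∉ N i := by
  classical
  let V : ι → Submodule k (σ → k) := fun i =>
    (((N i).comap (Fintype.linearCombination R xs)).restrictScalars k).comap
      (LinearMap.compLeft (Algebra.linearMap k R) σ)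
  have mem_V : ∀ i c, c ∈ V i ↔ ∑ j, algebraMap k R (c j) • xs j ∈ N i := fun _ _ => Iff.rfl
  have V_ne_top : ∀ i, V i ≠ ⊤ := by
    intro i hi
    obtain ⟨j, hj⟩ := h i
    have := (mem_V i (Pi.single j 1)).mp (hi ▸ Submodule.mem_top)
    exact hj (by simpa [Pi.single_apply] using this)
  by_contra! hcover
  obtain ⟨i, hi⟩ := Subspace.exists_eq_top_of_iUnion_eq_univ (p := V) <|
    Set.eq_univ_of_forall fun c => Set.mem_iUnion.mpr ((hcover c).imp fun i => (mem_V i c).mpr)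
  exact V_ne_top i hi

theorem TensorProduct.exists_one_tmul_ne_zero {R A M ι : Type*} [CommSemiring R] [Semiring A]
    [Algebra R A] [AddCommMonoid M] [Module R M] [Nontrivial (A ⊗[R] M)] (xs : ι → M)
    (hgen : Submodule.span R (Set.range xs) = ⊤) : ∃ i, (1 : A) ⊗ₜ[R] xs i ≠ 0 := by
  by_contra! h
  have span_eq_top : Submodule.span A (TensorProduct.mk R A M 1 '' Set.range xs) = ⊤ := by
    rw [← Submodule.baseChange_span, hgen, Submodule.baseChange_top]
  have span_eq_bot : Submodule.span A (TensorProduct.mk R A M 1 '' Set.range xs) = ⊥ := by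
    rw [Submodule.span_eq_bot]
    rintro _ ⟨_, ⟨i, rfl⟩, rfl⟩
    exact h i
  exact not_subsingleton (A ⊗[R] M) <|
    (Submodule.subsingleton_iff A).mp (subsingleton_iff_bot_eq_top.mp (span_eq_bot ▸ span_eq_top))

theorem stmt1_general
    (k : Type*) [Field k] [Infinite k] [Algebra k R]
    (M : Type*) [AddCommGroup M] [Module R M] [Module.Finite R M]
    {n : ℕ} (xs : Fin n → M) (hgen : Submodule.span R (Set.range xs) = ⊤)
    (P : Set (PrimeSpectrum R)) (hP : P ⊆ Module.support R M) (hfin : P.Finite) :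
    ∃ c : Fin n → k, ∀ p ∈ P,
      fiberImg p (∑ i, algebraMap k R (c i) • xs i) ≠ 0 := by
  have := hfin.to_subtype
  have fiber_ne_zero : ∀ p : P, ∃ i, fiberImg p.1 (xs i) ≠ 0 := fun p =>
    have := (Module.mem_support_iff_nontrivial_residueField_tensorProduct p.1).mp (hP p.2)
    TensorProduct.exists_one_tmul_ne_zero xs hgen
  obtain ⟨c, hc⟩ := exists_sum_algebraMap_smul_notMem (k := k)
    (fun p : P => LinearMap.ker (TensorProduct.mk R (resField p.1) M 1)) xs fiber_ne_zero
  exact ⟨c, fun p hp => hc ⟨p, hp⟩⟩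

/-- **Lemma 2.1(2).** Let `R` be a Noetherian ring containing an infinite field `k` as a
subring and `M` a finitely generated `R`-module generated by `x₁, …, xₙ`.  If `P` is a
finite subset of `Supp_R M`, then there is `y ∈ Σᵢ k xᵢ` with `y(p) ≠ 0` for all `p ∈ P`. -/
theorem stmt1 [IsNoetherianRing R] [Nontrivial R]
    (k : Type*) [Field k] [Infinite k] [Algebra k R]
    (M : Type*) [AddCommGroup M] [Module R M] [Module.Finite R M]
    {n : ℕ} (xs : Fin n → M) (hgen : Submodule.span R (Set.range xs) = ⊤)
    (P : Set (PrimeSpectrum R)) (hP : P ⊆ Module.support R M) (hfin : P.Finite) :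
    ∃ c : Fin n → k, ∀ p ∈ P,
      fiberImg p (∑ i, algebraMap k R (c i) • xs i) ≠ 0 :=
  stmt1_general k M xs hgen P hP hfin
end
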